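/- Let G be an induced subgraph of the grid ℤ^k (vertices are k-tuples of integers; edges increase one coordinate by 1) whose vertex set V satisfies: (i) if u, w ∈ V then the coordinatewise minimum min(u,w) ∈ V; (ii) if u ∈ V and u + m·e_i ∈ V for some positive integer m, then u + s·e_i ∈ V for all 0 ≤ s ≤ m. Let u, v ∈ V with deg u ≥ deg v (deg = coordinate sum), and suppose φ is a formal series in monomials of degree deg v such that: the coefficient of v in φ is 1; the coefficient of any other v' ∈ V with deg v' = deg v is 0; and for any w ∉ V with w + e_i ∈ V for some i and deg w ≥ deg v, the coefficient of w in φ·(x_1+...+x_k)^{deg w − deg v} is 0. Then the number of directed paths in G from v to u equals the coefficient of u in φ·(x_1+...+x_k)^{deg u − deg v}. -/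

import Mathlib

/-!
Both sides satisfy the same recursion in `u`. A path to `u ∈ V` of length `n + 1` is a path of
length `n` to some `u - eᵢ` followed by one step, so the path count at `u` is the sum of the
path counts at the `u - eᵢ`; the coefficient of `u` in `φ·(x₁+⋯+x_k)^{n+1}` is the sum of the
coefficients of the `u - eᵢ` in `φ·(x₁+⋯+x_k)^n`. A neighbour `u - eᵢ ∉ V` contributes no
paths, and its coefficient vanishes by the boundary condition. In degree `deg v` the two sides
agree by the normalisation of `φ` at the vertices, so induction on `deg u - deg v` concludes.
-/

open Finset

/-- Multiplication of a formal series (given by its coefficient function on the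
monomials `ℤ^k`) by `x₁ + ⋯ + x_k`: the coefficient of `w` in `φ·(x₁+⋯+x_k)` is
`∑ᵢ [w/xᵢ]φ`. -/
def mulSum {k : ℕ} (φ : (Fin k → ℤ) → ℚ) : (Fin k → ℤ) → ℚ :=
  fun w => ∑ i : Fin k, φ (fun t => w t - if t = i then 1 else 0)

/-- A directed path of length `N` from `v` to `u` inside the induced subgraph of the
grid `ℤ^k` on a vertex set `V`: each step increases exactly one coordinate by `1`,
and all vertices of the path lie in `V`. -/
def GridPath (k N : ℕ) (V : Set (Fin k → ℤ)) (v u : Fin k → ℤ) : Type :=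
  { f : Fin (N + 1) → (Fin k → ℤ) //
      f 0 = v ∧ f (Fin.last N) = u ∧ (∀ j, f j ∈ V) ∧
      ∀ j : Fin N, ∃ i : Fin k,
        f j.succ = fun t => f j.castSucc t + if t = i then 1 else 0 }

namespace GridPath

variable {k N : ℕ} {V : Set (Fin k → ℤ)} {v u : Fin k → ℤ}

lemma target_mem (p : GridPath k N V v u) : u ∈ V :=
  p.2.2.1 ▸ p.2.2.2.1 _

lemma isEmpty_of_not_mem (hu : u ∉ V) : IsEmpty (GridPath k N V v u) :=
  ⟨fun p => hu p.target_mem⟩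

lemma eq_of_length_zero (p : GridPath k 0 V v u) : u = v :=
  p.2.2.1.symm.trans p.2.1

instance : Subsingleton (GridPath k 0 V v u) :=
  ⟨fun p q => Subtype.ext <| funext fun j => by
    rw [Fin.fin_one_eq_zero j, p.2.1, q.2.1]⟩

lemma card_length_zero_self (hv : v ∈ V) : Nat.card (GridPath k 0 V v v) = 1 :=
  Nat.card_eq_one_iff_unique.2
    ⟨inferInstance, ⟨⟨fun _ => v, rfl, rfl, fun _ => hv, fun j => j.elim0⟩⟩⟩

def snoc (hu : u ∈ V)
    (q : Σ i : Fin k, GridPath k N V v (fun t => u t - if t = i then 1 else 0)) :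
    GridPath k (N + 1) V v u :=
  ⟨Fin.snoc q.2.1 u, by
    obtain ⟨i, g, hg0, hgl, hgV, hgstep⟩ := q
    dsimp only
    refine ⟨?_, Fin.snoc_last _ _, ?_, ?_⟩
    · rw [← Fin.castSucc_zero, Fin.snoc_castSucc, hg0]
    · intro j
      induction j using Fin.lastCases with
      | last => rw [Fin.snoc_last]; exact hu
      | cast j => rw [Fin.snoc_castSucc]; exact hgV j
    · intro j
      induction j using Fin.lastCases with
      | last =>
        refine ⟨i, ?_⟩
        rw [Fin.succ_last, Fin.snoc_last, Fin.snoc_castSucc, hgl]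
        funext t
        ring
      | cast j =>
        obtain ⟨i', hi'⟩ := hgstep j
        exact ⟨i', by rw [Fin.succ_castSucc, Fin.snoc_castSucc, Fin.snoc_castSucc, hi']⟩⟩

lemma snoc_injective (hu : u ∈ V) : Function.Injective (snoc (N := N) (v := v) hu) := by
  rintro ⟨i, g, hg0, hgl, hgV, hgstep⟩ ⟨i', g', hg0', hgl', hgV', hgstep'⟩ h
  have hsnoc : (Fin.snoc g u : Fin (N + 2) → Fin k → ℤ) = Fin.snoc g' u :=
    congrArg Subtype.val h
  have hg : g = g' := funext fun j => by
    simpa only [Fin.snoc_castSucc] using congrFun hsnoc j.castSucc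
  have hi : i = i' := by
    by_contra hne
    have hlast := congrFun (hgl.symm.trans (hg ▸ hgl')) i
    simp [hne] at hlast
  subst hi hg
  rfl

lemma snoc_surjective (hu : u ∈ V) : Function.Surjective (snoc (N := N) (v := v) hu) := by
  rintro ⟨f, hf0, hfl, hfV, hfstep⟩
  choose dir hdir using id hfstep
  refine ⟨⟨dir (Fin.last N), fun j => f j.castSucc, ?_, ?_, fun j => hfV _, fun j =>
    ⟨dir j.castSucc, by simpa only [Fin.succ_castSucc] using hdir j.castSucc⟩⟩, ?_⟩
  · exact (congrArg f Fin.castSucc_zero).trans hf0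
  · funext t
    have hstep := congrFun (hdir (Fin.last N)) t
    rw [Fin.succ_last, hfl] at hstep
    rw [hstep]
    ring
  · refine Subtype.ext (funext fun j => ?_)
    induction j using Fin.lastCases with
    | last => exact (Fin.snoc_last (α := fun _ => Fin k → ℤ) _ _).trans hfl.symm
    | cast j => exact Fin.snoc_castSucc (α := fun _ => Fin k → ℤ) _ _ _

noncomputable def snocEquiv (hu : u ∈ V) :
    (Σ i : Fin k, GridPath k N V v (fun t => u t - if t = i then 1 else 0)) ≃
      GridPath k (N + 1) V v u :=
  Equiv.ofBijective _ ⟨snoc_injective hu, snoc_surjective hu⟩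

instance finite (k N : ℕ) (V : Set (Fin k → ℤ)) (v u : Fin k → ℤ) :
    Finite (GridPath k N V v u) := by
  induction N generalizing u with
  | zero => infer_instance
  | succ N ih =>
    by_cases hu : u ∈ V
    · exact Finite.of_equiv _ (snocEquiv hu)
    · have := isEmpty_of_not_mem (N := N + 1) (v := v) hu
      infer_instance

lemma card_succ (hu : u ∈ V) :
    Nat.card (GridPath k (N + 1) V v u) =
      ∑ i : Fin k, Nat.card (GridPath k N V v (fun t => u t - if t = i then 1 else 0)) := by
  rw [← Nat.card_congr (snocEquiv hu), Nat.card_sigma]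

end GridPath

lemma sum_sub_ite_eq_sub_one {k : ℕ} (u : Fin k → ℤ) (i : Fin k) :
    ∑ t, (u t - if t = i then 1 else 0) = ∑ t, u t - 1 := by
  rw [sum_sub_distrib, sum_ite_eq' univ i, if_pos (mem_univ i)]

lemma mulSum_iterate_succ_apply {k : ℕ} (φ : (Fin k → ℤ) → ℚ) (n : ℕ) (u : Fin k → ℤ) :
    (mulSum^[n + 1] φ) u = ∑ i, (mulSum^[n] φ) (fun t => u t - if t = i then 1 else 0) := by
  rw [Function.iterate_succ_apply']
  rfl

theorem card_gridPath_eq_mulSum_iterate {k : ℕ} {V : Set (Fin k → ℤ)} {v : Fin k → ℤ}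
    {φ : (Fin k → ℤ) → ℚ} (hφv : φ v = 1)
    (hφv' : ∀ v' ∈ V, ∑ i, v' i = ∑ i, v i → v' ≠ v → φ v' = 0)
    (hbd : ∀ (n : ℕ) (w : Fin k → ℤ), w ∉ V →
      (∃ i : Fin k, (fun t => w t + if t = i then (1 : ℤ) else 0) ∈ V) →
      ∑ i, w i = ∑ i, v i + n → (mulSum^[n] φ) w = 0)
    (n : ℕ) {u : Fin k → ℤ} (hu : u ∈ V) (hdeg : ∑ i, u i = ∑ i, v i + n) :
    (Nat.card (GridPath k n V v u) : ℚ) = (mulSum^[n] φ) u := by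
  induction n generalizing u with
  | zero =>
    rw [Function.iterate_zero_apply]
    by_cases huv : u = v
    · subst huv
      rw [GridPath.card_length_zero_self hu, hφv, Nat.cast_one]
    · have : IsEmpty (GridPath k 0 V v u) := ⟨fun p => huv p.eq_of_length_zero⟩
      rw [Nat.card_of_isEmpty, hφv' u hu (by omega) huv, Nat.cast_zero]
  | succ n ih =>
    rw [GridPath.card_succ hu, mulSum_iterate_succ_apply, Nat.cast_sum]
    refine sum_congr rfl fun i _ => ?_
    have hdeg' : ∑ t, (u t - if t = i then 1 else 0) = ∑ t, v t + n := by
      rw [sum_sub_ite_eq_sub_one]; omega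
    by_cases hw : (fun t => u t - if t = i then 1 else 0) ∈ V
    · exact ih hw hdeg'
    · have hstep : (fun t => (u t - if t = i then 1 else 0) + if t = i then (1 : ℤ) else 0) = u :=
        funext fun t => sub_add_cancel _ _
      have := GridPath.isEmpty_of_not_mem (N := n) (v := v) hw
      rw [Nat.card_of_isEmpty, Nat.cast_zero, hbd n _ hw ⟨i, hstep.symm ▸ hu⟩ hdeg']

theorem stmt_19_general (k : ℕ) (V : Set (Fin k → ℤ))
    (v u : Fin k → ℤ) (hu : u ∈ V) (hdeg : ∑ i, v i ≤ ∑ i, u i)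
    (φ : (Fin k → ℤ) → ℚ)
    (hφv : φ v = 1)
    (hφv' : ∀ v' ∈ V, (∑ i, v' i) = (∑ i, v i) → v' ≠ v → φ v' = 0)
    (hbd : ∀ w : Fin k → ℤ, w ∉ V →
      (∃ i : Fin k, (fun t => w t + if t = i then (1 : ℤ) else 0) ∈ V) →
      (∑ i, v i) ≤ (∑ i, w i) →
      (mulSum^[((∑ i, w i) - ∑ i, v i).toNat] φ) w = 0) :
    (Nat.card (GridPath k ((∑ i, u i) - ∑ i, v i).toNat V v u) : ℚ) =
      (mulSum^[((∑ i, u i) - ∑ i, v i).toNat] φ) u := by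
  refine card_gridPath_eq_mulSum_iterate hφv hφv' (fun n w hw hstep hwdeg => ?_) _ hu (by omega)
  have hn : ((∑ i, w i) - ∑ i, v i).toNat = n := by omega
  exact hn ▸ hbd w hw hstep (by omega)

/-- Path-counting via coefficients: if `V ⊆ ℤ^k` is minimum-closed and coordinate
convex, `u, v ∈ V` with `deg u ≥ deg v` (`deg` = coordinate sum), and `φ` is a formal
series supported in degree `deg v` with `[v]φ = 1`, `[v']φ = 0` for other vertices `v'`
of degree `deg v`, and `[w](φ·(x₁+⋯+x_k)^{deg w - deg v}) = 0` for every non-vertex `w`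
of degree `≥ deg v` with `w + eᵢ ∈ V` for some `i`, then the number of directed paths
from `v` to `u` in the induced graph equals `[u](φ·(x₁+⋯+x_k)^{deg u - deg v})`. -/
theorem stmt_19 (k : ℕ) (hk : 0 < k) (V : Set (Fin k → ℤ))
    (hmin : ∀ u ∈ V, ∀ w ∈ V, (fun t => min (u t) (w t)) ∈ V)
    (hconv : ∀ u ∈ V, ∀ i : Fin k, ∀ mm : ℕ,
      (fun t => u t + if t = i then (mm : ℤ) else 0) ∈ V →
      ∀ s : ℕ, s ≤ mm → (fun t => u t + if t = i then (s : ℤ) else 0) ∈ V)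
    (v u : Fin k → ℤ) (hv : v ∈ V) (hu : u ∈ V) (hdeg : ∑ i, v i ≤ ∑ i, u i)
    (φ : (Fin k → ℤ) → ℚ)
    (hhom : ∀ w : Fin k → ℤ, (∑ i, w i) ≠ (∑ i, v i) → φ w = 0)
    (hφv : φ v = 1)
    (hφv' : ∀ v' ∈ V, (∑ i, v' i) = (∑ i, v i) → v' ≠ v → φ v' = 0)
    (hbd : ∀ w : Fin k → ℤ, w ∉ V →
      (∃ i : Fin k, (fun t => w t + if t = i then (1 : ℤ) else 0) ∈ V) →
      (∑ i, v i) ≤ (∑ i, w i) →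
      (mulSum^[((∑ i, w i) - ∑ i, v i).toNat] φ) w = 0) :
    (Nat.card (GridPath k ((∑ i, u i) - ∑ i, v i).toNat V v u) : ℚ) =
      (mulSum^[((∑ i, u i) - ∑ i, v i).toNat] φ) u :=
  stmt_19_general k V v u hu hdeg φ hφv hφv' hbd
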